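/- arXiv:0809.2425 — 4 statements merged into one kernel-verified Lean document; each statement's English description precedes it below -/
import Mathlib

section
/- Let A be a commutative ring and (a₁, …, a_d) a regular sequence in A. Let B = A[x₁, …, x_{d−1}]/(a₁ − a_d x₁, …, a_{d−1} − a_d x_{d−1}). Then the image of a_d in B is a non-zero-divisor. -/
/-!
Write `t = a_d`, `J = (a₁, …, a_{d-1})` and `rᵢ = aᵢ - t xᵢ`. If `t f = ∑ gᵢ rᵢ`, then
`t (f + ∑ gᵢ xᵢ) = ∑ gᵢ aᵢ ∈ J`, so regularity of `t` modulo `J` gives `f + ∑ gᵢ xᵢ = ∑ hᵢ aᵢ`.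
Hence `∑ (gᵢ - t hᵢ) aᵢ = 0`, and since the syzygies of a regular sequence are Koszul,
`gᵢ - t hᵢ = ∑ⱼ mᵢⱼ aⱼ` with `m` alternating. Modulo the `rᵢ` we have `aᵢ = t xᵢ`, so
`f = t ∑ hᵢ xᵢ - ∑ gᵢ xᵢ = -t ∑ mᵢⱼ xᵢ xⱼ = 0`. This works for arbitrary elements `xᵢ` of any
ring on which the sequence is weakly regular, and weak regularity passes from `A` to the flat
extension `A[x₁, …, x_{d-1}]`.
-/

open Matrix

lemma Matrix.dotProduct_mulVec_self_eq_zero {R ι : Type*} [CommRing R] [Fintype ι]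
    {m : Matrix ι ι R} (hskew : mᵀ = -m) (hdiag : m.diag = 0) (x : ι → R) : x ⬝ᵥ m *ᵥ x = 0 := by
  simp only [dotProduct, mulVec, Finset.mul_sum, ← Finset.sum_product']
  refine Finset.sum_ninvolution Prod.swap (fun p => ?_) (fun p hp hswap => hp ?_) (by simp)
    Prod.swap_swap
  · have := congrFun₂ hskew p.1 p.2
    simp only [transpose_apply, neg_apply] at this
    simp only [Prod.fst_swap, Prod.snd_swap, this]
    ring
  · have : p.2 = p.1 := congrArg Prod.fst hswap
    simp [this, ← diag_apply, hdiag]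

lemma Ideal.ofList_ofFn {R : Type*} [Semiring R] {n : ℕ} (b : Fin n → R) :
    Ideal.ofList (List.ofFn b) = Ideal.span (Set.range b) := by
  simp only [Ideal.ofList, List.mem_ofFn]
  rfl

namespace RingTheory.Sequence

variable {R : Type*} [CommRing R]

lemma isWeaklyRegular_append_singleton_iff (rs : List R) (t : R) :
    IsWeaklyRegular R (rs ++ [t]) ↔
      IsWeaklyRegular R rs ∧ ∀ c, t * c ∈ Ideal.ofList rs → c ∈ Ideal.ofList rs := by
  rw [isWeaklyRegular_append_iff, isWeaklyRegular_singleton_iff,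
    isSMulRegular_quotient_iff_mem_of_smul_mem, Ideal.smul_eq_mul, Ideal.mul_top]
  rfl

lemma isWeaklyRegular_ofFn_succ_iff {n : ℕ} (b : Fin (n + 1) → R) :
    IsWeaklyRegular R (List.ofFn b) ↔ IsWeaklyRegular R (List.ofFn fun i => b i.castSucc) ∧
      ∀ c, b (Fin.last n) * c ∈ Ideal.span (Set.range fun i : Fin n => b i.castSucc) →
        c ∈ Ideal.span (Set.range fun i : Fin n => b i.castSucc) := by
  rw [List.ofFn_succ', List.concat_eq_append, isWeaklyRegular_append_singleton_iff,
    Ideal.ofList_ofFn]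

lemma IsWeaklyRegular.map_algebraMap {S : Type*} [CommRing S] [Algebra R S]
    [Module.Flat R S] {rs : List R} (h : IsWeaklyRegular R rs) :
    IsWeaklyRegular S (rs.map (algebraMap R S)) :=
  (isWeaklyRegular_map_algebraMap_iff S S rs).mpr
    ((TensorProduct.rid R S).isWeaklyRegular_congr rs |>.mp h.isWeaklyRegular_lTensor)

theorem IsWeaklyRegular.exists_alternating_of_dotProduct_eq_zero {n : ℕ}
    {b : Fin n → R} (hb : IsWeaklyRegular R (List.ofFn b)) {c : Fin n → R} (hc : c ⬝ᵥ b = 0) :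
    ∃ m : Matrix (Fin n) (Fin n) R, mᵀ = -m ∧ m.diag = 0 ∧ c = m *ᵥ b := by
  induction n with
  | zero => exact ⟨0, by simp, by simp, funext fun i => i.elim0⟩
  | succ n ih =>
    obtain ⟨hinit, hlast⟩ := (isWeaklyRegular_ofFn_succ_iff b).mp hb
    rw [dotProduct, Fin.sum_univ_castSucc] at hc
    obtain ⟨e, he⟩ := Ideal.mem_span_range_iff_exists_fun.mp <| hlast (c (Fin.last n)) <| by
      rw [show b (Fin.last n) * c (Fin.last n) = -∑ i : Fin n, c i.castSucc * b i.castSucc by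
        linear_combination hc]
      exact neg_mem <| Ideal.sum_mem _ fun i _ =>
        Ideal.mul_mem_left _ _ (Ideal.subset_span ⟨i, rfl⟩)
    obtain ⟨m, hskew, hdiag, hm⟩ :=
        ih hinit (c := fun i => c i.castSucc + e i * b (Fin.last n)) <| by
      simp only [dotProduct, add_mul, Finset.sum_add_distrib, mul_right_comm _ (b (Fin.last n)),
        ← Finset.sum_mul, he]
      linear_combination hc
    refine ⟨Matrix.of (Fin.snoc (fun i => Fin.snoc (m i) (-e i)) (Fin.snoc e 0)), ?_, ?_, ?_⟩
    · ext i j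
      induction i using Fin.lastCases <;> induction j using Fin.lastCases <;>
        simp only [transpose_apply, of_apply, Fin.snoc_castSucc, Fin.snoc_last, Matrix.neg_apply,
          neg_zero, neg_neg]
      exact congrFun₂ hskew _ _
    · ext i
      induction i using Fin.lastCases with
      | last => simp [diag_apply]
      | cast i => simpa [diag_apply] using congrFun hdiag i
    · ext i
      induction i using Fin.lastCases with
      | last => simp [mulVec, dotProduct, Fin.sum_univ_castSucc, he]
      | cast i =>
        have := congrFun hm i
        simp only [mulVec, dotProduct] at this
        simp [mulVec, dotProduct, Fin.sum_univ_castSucc, ← this]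

theorem IsWeaklyRegular.mk_last_mem_nonZeroDivisors {n : ℕ}
    {b : Fin (n + 1) → R} (hb : IsWeaklyRegular R (List.ofFn b)) (x : Fin n → R) :
    Ideal.Quotient.mk (Ideal.span (Set.range fun i => b i.castSucc - b (Fin.last n) * x i))
        (b (Fin.last n)) ∈
      nonZeroDivisors
        (R ⧸ Ideal.span (Set.range fun i => b i.castSucc - b (Fin.last n) * x i)) := by
  set J := Ideal.span (Set.range fun i => b i.castSucc - b (Fin.last n) * x i)
  set t := b (Fin.last n)
  set b' : Fin n → R := fun i => b i.castSucc
  set φ := Ideal.Quotient.mk J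
  obtain ⟨hinit, hlast⟩ := (isWeaklyRegular_ofFn_succ_iff b).mp hb
  rw [mem_nonZeroDivisors_iff_right, φ.surjective.forall]
  intro f hf
  rw [← map_mul, Ideal.Quotient.eq_zero_iff_mem] at hf
  obtain ⟨g, hg⟩ := Ideal.mem_span_range_iff_exists_fun.mp hf
  replace hg : g ⬝ᵥ b' - t * (g ⬝ᵥ x) = f * t := by
    rw [← smul_eq_mul, ← dotProduct_smul, ← dotProduct_sub]
    exact hg
  obtain ⟨h, hh⟩ := Ideal.mem_span_range_iff_exists_fun.mp <| hlast (f + g ⬝ᵥ x) <| by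
    rw [show t * (f + g ⬝ᵥ x) = g ⬝ᵥ b' by linear_combination -hg]
    exact Ideal.sum_mem _ fun i _ => Ideal.mul_mem_left _ _ (Ideal.subset_span ⟨i, rfl⟩)
  replace hh : h ⬝ᵥ b' = f + g ⬝ᵥ x := hh
  obtain ⟨m, hskew, hdiag, hm⟩ :=
      hinit.exists_alternating_of_dotProduct_eq_zero (c := g - t • h) <| by
    rw [sub_dotProduct, smul_dotProduct, hh, smul_eq_mul]
    linear_combination hg
  replace hm : g = t • h + m *ᵥ b' := eq_add_of_sub_eq' hm
  have hgen : φ ∘ b' = φ t • (φ ∘ x) := by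
    ext i
    have : φ (b' i - t * x i) = 0 :=
      Ideal.Quotient.eq_zero_iff_mem.mpr (Ideal.subset_span ⟨i, rfl⟩)
    simpa [sub_eq_zero] using this
  have hf' : φ f = (φ ∘ h) ⬝ᵥ (φ ∘ b') - (φ ∘ g) ⬝ᵥ (φ ∘ x) := by
    rw [← RingHom.map_dotProduct, ← RingHom.map_dotProduct, ← map_sub, hh, add_sub_cancel_right]
  have hg' : φ ∘ g = φ t • (φ ∘ h) + m.map φ *ᵥ (φ ∘ b') := by
    ext i
    simp [hm, RingHom.map_mulVec]
  have hskew' : (m.map φ)ᵀ = -m.map φ := by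
    rw [← transpose_map, hskew, Matrix.map_neg _ (map_neg φ)]
  have hdiag' : (m.map φ).diag = 0 := by rw [diag_map, hdiag]; rfl
  rw [hf', hg', hgen, add_dotProduct, mulVec_smul, smul_dotProduct, smul_dotProduct,
    dotProduct_smul, dotProduct_comm (m.map φ *ᵥ _), dotProduct_mulVec_self_eq_zero hskew' hdiag',
    smul_zero, add_zero, sub_self]

end RingTheory.Sequence

open MvPolynomial

/-- In the blow-up chart `B = A[x₁,…,x_d]/(aᵢ - a_{d+1} xᵢ)` of a regular sequence
`(a₁,…,a_{d+1})`, the image of the last element is a non-zero-divisor. -/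
theorem stmt0 (A : Type*) [CommRing A] (d : ℕ) (a : Fin (d + 1) → A)
    (hreg : RingTheory.Sequence.IsRegular A (List.ofFn a))
    (I : Ideal (MvPolynomial (Fin d) A))
    (hI : I = Ideal.span (Set.range fun i : Fin d =>
      C (a i.castSucc) - C (a (Fin.last d)) * X i)) :
    Ideal.Quotient.mk I (C (a (Fin.last d))) ∈
      nonZeroDivisors (MvPolynomial (Fin d) A ⧸ I) := by
  subst hI
  have hregC : RingTheory.Sequence.IsWeaklyRegular (MvPolynomial (Fin d) A)
      (List.ofFn fun i => (C (a i) : MvPolynomial (Fin d) A)) := by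
    have := hreg.toIsWeaklyRegular.map_algebraMap (S := MvPolynomial (Fin d) A)
    rwa [List.map_ofFn, algebraMap_eq] at this
  exact hregC.mk_last_mem_nonZeroDivisors X
end

section
/- Let A be a commutative ring and (a₁, …, a_d) a regular sequence in A. Then the kernel of the A-module map A^d → A sending the i-th basis vector to aᵢ is generated by the elements aᵢ·e_j − a_j·eᵢ for 1 ≤ i < j ≤ d, where e₁,…,e_d are the standard basis vectors. -/
/-!
For a syzygy `v` vanishing beyond index `k`, `a k * v k` lies in the ideal of the earlier `a j`,
so regularity gives `v k = ∑_{j<k} l j * a j`. Subtracting `∑ l j • (a j • e k - a k • e j)`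
kills the `k`-th coordinate without touching the later ones, and induction on `k` finishes.
-/

open Submodule RingTheory.Sequence

section

variable {A : Type*} [CommRing A] {d : ℕ} (a : Fin d → A)

def koszulSyzygy (i j : Fin d) : Fin d → A :=
  a i • Pi.single j 1 - a j • Pi.single i 1

def koszulSyzygies : Set (Fin d → A) :=
  {v | ∃ i j, i < j ∧ v = koszulSyzygy a i j}

lemma linearCombination_koszulSyzygy (i j : Fin d) :
    Fintype.linearCombination A a (koszulSyzygy a i j) = 0 := by
  simp [koszulSyzygy, Fintype.linearCombination_apply_single, mul_comm]

lemma span_koszulSyzygies_le_ker :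
    span A (koszulSyzygies a) ≤ LinearMap.ker (Fintype.linearCombination A a) := by
  rw [span_le]
  rintro _ ⟨i, j, -, rfl⟩
  exact linearCombination_koszulSyzygy a i j

lemma koszulSyzygy_apply_of_lt {i j l : Fin d} (hil : i < l) :
    koszulSyzygy a i j l = (Pi.single j (a i) : Fin d → A) l := by
  simp [koszulSyzygy, Pi.single_apply, hil.ne']

lemma exists_mem_span_koszulSyzygies {k : Fin d} {c : A}
    (hc : c ∈ Ideal.span (a '' Set.Iio k)) :
    ∃ u ∈ span A (koszulSyzygies a), ∀ i, k ≤ i → u i = (Pi.single k c : Fin d → A) i := by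
  rw [Set.image_eq_range, Ideal.mem_span_range_iff_exists_fun] at hc
  obtain ⟨l, rfl⟩ := hc
  refine ⟨∑ j, l j • koszulSyzygy a j k,
    sum_mem fun j _ => smul_mem _ _ (subset_span ⟨j, k, j.2, rfl⟩), fun i hki => ?_⟩
  have hterm (j : Set.Iio k) : koszulSyzygy a j k i = (Pi.single k (a j) : Fin d → A) i :=
    koszulSyzygy_apply_of_lt a (lt_of_lt_of_le j.2 hki)
  simp only [Finset.sum_apply, Pi.smul_apply, smul_eq_mul, hterm]
  rcases eq_or_ne i k with rfl | hik
  · simp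
  · simp [hik]

lemma mul_mem_span_Iio_of_mem_ker {v : Fin d → A}
    (hv : v ∈ LinearMap.ker (Fintype.linearCombination A a)) {k : Fin d}
    (hk : ∀ i, k < i → v i = 0) : a k * v k ∈ Ideal.span (a '' Set.Iio k) := by
  classical
  rw [LinearMap.mem_ker, Fintype.linearCombination_apply, Fintype.sum_eq_add_sum_compl k] at hv
  simp only [smul_eq_mul] at hv
  rw [mul_comm, eq_neg_of_add_eq_zero_left hv]
  refine neg_mem (sum_mem fun i hi => ?_)
  rcases lt_or_gt_of_ne (show i ≠ k by simpa using hi) with hik | hki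
  · exact Ideal.mul_mem_left _ _ (Ideal.subset_span ⟨i, hik, rfl⟩)
  · simp [hk i hki]

lemma Ideal.ofList_take_ofFn (k : Fin d) :
    Ideal.ofList ((List.ofFn a).take k) = Ideal.span (a '' Set.Iio k) := by
  rw [← Fin.ofFn_take_eq_take_ofFn k.is_le', Ideal.ofList]
  congr 1
  ext r
  simp only [List.mem_ofFn, Set.mem_ofPred_eq, Fin.take, Set.mem_image, Set.mem_Iio]
  constructor
  · rintro ⟨j, rfl⟩
    exact ⟨_, j.2, rfl⟩
  · rintro ⟨j, hj, rfl⟩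
    exact ⟨⟨j, hj⟩, rfl⟩

lemma RingTheory.Sequence.IsWeaklyRegular.mem_span_Iio_of_mul_mem
    (h : IsWeaklyRegular A (List.ofFn a)) (k : Fin d) {x : A}
    (hx : a k * x ∈ Ideal.span (a '' Set.Iio k)) : x ∈ Ideal.span (a '' Set.Iio k) := by
  have hk := h.regular_mod_prev k (by simp)
  rw [Ideal.ofList_take_ofFn, List.getElem_ofFn, smul_eq_mul, Ideal.mul_top] at hk
  exact mem_of_isSMulRegular_quotient_of_smul_mem hk hx

lemma mem_span_koszulSyzygies_of_forall_le_eq_zero (h : IsWeaklyRegular A (List.ofFn a))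
    (n : ℕ) {v : Fin d → A} (hv : v ∈ LinearMap.ker (Fintype.linearCombination A a))
    (hvn : ∀ i : Fin d, n ≤ i → v i = 0) : v ∈ span A (koszulSyzygies a) := by
  induction n generalizing v with
  | zero =>
    rw [show v = 0 from funext fun i => hvn i i.val.zero_le]
    exact zero_mem _
  | succ n ih =>
    by_cases hn : n < d
    swap
    · exact ih hv fun i hi => absurd i.2 (by omega)
    set k : Fin d := ⟨n, hn⟩
    obtain ⟨u, hu, huk⟩ := exists_mem_span_koszulSyzygies a
      (h.mem_span_Iio_of_mul_mem a k (mul_mem_span_Iio_of_mem_ker a hv fun i hi => hvn i hi))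
    have hvu : v - u ∈ span A (koszulSyzygies a) := by
      refine ih (sub_mem hv (span_koszulSyzygies_le_ker a hu)) fun i hi => ?_
      rw [Pi.sub_apply, huk i hi]
      rcases eq_or_ne i k with rfl | hik
      · simp
      · simp [hik, hvn i (lt_of_le_of_ne hi (Ne.symm (Fin.val_ne_of_ne hik)))]
    simpa using add_mem hvu hu

theorem ker_eq_span_koszulSyzygies (h : IsWeaklyRegular A (List.ofFn a)) :
    LinearMap.ker (Fintype.linearCombination A a) = span A (koszulSyzygies a) :=
  le_antisymm (fun _ hv => mem_span_koszulSyzygies_of_forall_le_eq_zero a h d hv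
    fun i hi => absurd i.2 (not_lt.2 hi)) (span_koszulSyzygies_le_ker a)

end

/-- The first Koszul syzygies generate all syzygies of a regular sequence:
the kernel of `A^d → A, eᵢ ↦ aᵢ` is generated by the elements
`aᵢ·e_j − a_j·eᵢ` for `i < j`. -/
theorem stmt4 (A : Type*) [CommRing A] (d : ℕ) (a : Fin d → A)
    (hreg : RingTheory.Sequence.IsRegular A (List.ofFn a)) :
    LinearMap.ker (Fintype.linearCombination A a) =
      Submodule.span A
        {v : Fin d → A | ∃ i j : Fin d, i < j ∧
          v = a i • (Pi.single j 1 : Fin d → A) - a j • (Pi.single i 1 : Fin d → A)} :=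
  ker_eq_span_koszulSyzygies a hreg.toIsWeaklyRegular
end

section
/- Let A be a commutative ring and I ⊆ A an ideal generated by a regular sequence (a₁, …, a_d). Then for every n ≥ 0, the natural surjection Sym^n_A(I) → I^n from the n-th symmetric power of I to the n-th power of I is an isomorphism. -/
/-!
Send a word `f : Fin n → Fin d` to `a (f 0) ⊗ ⋯ ⊗ a (f (n - 1))`. These tensors span `I^{⊗n}`,
and on functions `c` of words `μ` becomes the evaluation `c ↦ ∑ c f * ∏ a (f i)`. The Koszul
relations `a q • e f[i := p] - a p • e f[i := q]` (`e f` the basis vector of `f`) already vanish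
in `I^{⊗n}`, so it suffices that the kernel of the evaluation is spanned by permutation and Koszul
relations, i.e. that `I` is of linear type. This goes by induction on `d`. Let `b` be the last
element and `I'` the ideal of the others. The induction hypothesis makes the others
quasi-regular, and then `b` is regular modulo every power of `I'`. For a relation `c`, induct on
the largest number `t` of occurrences of the last letter: comparing the terms of degree `t` in `b`
shows that the coefficients of the sorted words with `t` occurrences lie in `I'`, and Koszul
relations trade each of them for words with `t - 1` occurrences.
-/

open Finset
open scoped TensorProduct

namespace LinearType

variable {A : Type*} [CommRing A]

section Pushforward

variable {α β : Type*} [Fintype α] [DecidableEq β]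

def pushforward (F : α → β) : (α → A) →ₗ[A] (β → A) :=
  Fintype.linearCombination A fun x => Pi.single (F x) 1

lemma pushforward_single [DecidableEq α] (F : α → β) (x : α) (r : A) :
    pushforward F (Pi.single x r) = Pi.single (F x) r := by
  rw [pushforward, Fintype.linearCombination_apply_single, ← Pi.single_smul, smul_eq_mul, mul_one]

lemma pushforward_apply (F : α → β) (c : α → A) (y : β) :
    pushforward F c y = ∑ x with F x = y, c x := by
  simp [pushforward, Fintype.linearCombination_apply, Pi.single_apply, Finset.sum_filter, eq_comm]

lemma linearCombination_pushforward [Fintype β] {M : Type*} [AddCommGroup M] [Module A M]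
    (F : α → β) (v : β → M) (c : α → A) :
    Fintype.linearCombination A v (pushforward F c) = Fintype.linearCombination A (v ∘ F) c := by
  simp only [Fintype.linearCombination_apply, pushforward_apply, Finset.sum_smul]
  rw [← Finset.sum_fiberwise univ F]
  exact sum_congr rfl fun y _ => sum_congr rfl fun x hx => by rw [← (mem_filter.1 hx).2]; rfl

lemma pushforward_comp_of_injective {F : α → β} (hF : Function.Injective F) {c : β → A}
    (hc : ∀ y ∉ Set.range F, c y = 0) : pushforward F (c ∘ F) = c := by
  funext y
  rw [pushforward_apply]
  by_cases hy : y ∈ Set.range F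
  · obtain ⟨x, rfl⟩ := hy
    rw [Finset.sum_eq_single_of_mem x (by simp) fun x' hx' hne =>
      (hne (hF (by simpa using hx'))).elim]
    rfl
  · rw [hc y hy, Finset.sum_eq_zero]
    intro x hx
    exact (hy ⟨x, by simpa using hx⟩).elim

end Pushforward

variable {d n : ℕ}

section Words

variable (a : Fin d → A)

def wordProd (f : Fin n → Fin d) : A := ∏ i, a (f i)

def wordEval : ((Fin n → Fin d) → A) →ₗ[A] A := Fintype.linearCombination A (wordProd a)

/-- Modulo the permutation relations, words are the monomials of degree `n` in `X₀, …, X_{d-1}`,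
and the second family are the Koszul relations `(a q * X p - a p * X q) * X^{f without i}`;
`IsLinearType a` says that they generate the kernel of `X ↦ a` in each degree, i.e. that the
symmetric algebra of `Ideal.span (Set.range a)` is its Rees algebra. -/
def wordRelations : Submodule A ((Fin n → Fin d) → A) :=
  Submodule.span A
    {x | (∃ (f : Fin n → Fin d) (σ : Equiv.Perm (Fin n)),
          x = Pi.single (f ∘ σ) 1 - Pi.single f 1) ∨
       (∃ (f : Fin n → Fin d) (i : Fin n) (p q : Fin d),
          x = a q • Pi.single (Function.update f i p) 1 -
            a p • Pi.single (Function.update f i q) 1)}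

def IsLinearType : Prop :=
  ∀ n, LinearMap.ker (wordEval a (n := n)) = wordRelations a

lemma wordEval_apply (c : (Fin n → Fin d) → A) : wordEval a c = ∑ f, c f * wordProd a f := rfl

lemma wordEval_single (f : Fin n → Fin d) (r : A) : wordEval a (Pi.single f r) = r * wordProd a f :=
  Fintype.linearCombination_apply_single _ _ _ _

lemma wordProd_comp_perm (f : Fin n → Fin d) (σ : Equiv.Perm (Fin n)) :
    wordProd a (f ∘ σ) = wordProd a f :=
  Equiv.prod_comp σ fun i => a (f i)

lemma wordProd_update (f : Fin n → Fin d) (i : Fin n) (p : Fin d) :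
    wordProd a (Function.update f i p) = a p * ∏ j ∈ univ.erase i, a (f j) := by
  rw [wordProd, ← Finset.mul_prod_erase _ _ (mem_univ i), Function.update_self]
  congr 1
  exact Finset.prod_congr rfl fun j hj => by rw [Function.update_of_ne (ne_of_mem_erase hj)]

lemma wordProd_cons (j : Fin d) (f : Fin n → Fin d) :
    wordProd a (Fin.cons j f : Fin (n + 1) → Fin d) = a j * wordProd a f :=
  Fin.prod_univ_succ _

lemma wordRelations_le_ker : wordRelations a ≤ LinearMap.ker (wordEval a (n := n)) := by
  rw [wordRelations, Submodule.span_le]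
  rintro x (⟨f, σ, rfl⟩ | ⟨f, i, p, q, rfl⟩) <;>
    simp only [SetLike.mem_coe, LinearMap.mem_ker, map_sub, map_smul, wordEval_single,
      smul_eq_mul]
  · rw [wordProd_comp_perm, sub_self]
  · rw [wordProd_update, wordProd_update]; ring

lemma wordRelations_map_comp_le {d' : ℕ} (φ : Fin d' → Fin d) :
    (wordRelations (a ∘ φ)).map (pushforward fun f : Fin n → Fin d' => φ ∘ f) ≤
      wordRelations a := by
  rw [wordRelations, Submodule.map_span_le]
  rintro x (⟨f, σ, rfl⟩ | ⟨f, i, p, q, rfl⟩)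
  · rw [map_sub, pushforward_single, pushforward_single]
    exact Submodule.subset_span (Or.inl ⟨φ ∘ f, σ, rfl⟩)
  · rw [map_sub, map_smul, map_smul, pushforward_single, pushforward_single,
      Function.comp_update, Function.comp_update]
    exact Submodule.subset_span (Or.inr ⟨φ ∘ f, i, φ p, φ q, rfl⟩)

lemma wordEval_pushforward_comp {d' : ℕ} (φ : Fin d' → Fin d) (c : (Fin n → Fin d') → A) :
    wordEval a (pushforward (fun f => φ ∘ f) c) = wordEval (a ∘ φ) c := by
  rw [wordEval, wordEval, linearCombination_pushforward]
  rfl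

lemma range_wordEval : LinearMap.range (wordEval a (n := n)) = Ideal.span (Set.range a) ^ n := by
  rw [wordEval, Fintype.range_linearCombination]
  induction n with
  | zero =>
    rw [pow_zero, Ideal.one_eq_top, Ideal.eq_top_iff_one]
    exact Submodule.subset_span ⟨finZeroElim, by simp [wordProd]⟩
  | succ n ih =>
    rw [pow_succ', ← ih, Ideal.span_mul_span']
    congr 1
    ext x
    simp only [Set.mem_mul, Set.mem_range]
    constructor
    · rintro ⟨f, rfl⟩
      exact ⟨_, ⟨f 0, rfl⟩, _, ⟨Fin.tail f, rfl⟩, by rw [← wordProd_cons, Fin.cons_self_tail]⟩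
    · rintro ⟨_, ⟨j, rfl⟩, _, ⟨f, rfl⟩, rfl⟩
      exact ⟨Fin.cons j f, wordProd_cons a j f⟩

lemma wordProd_mem_pow (f : Fin n → Fin d) : wordProd a f ∈ Ideal.span (Set.range a) ^ n :=
  (range_wordEval a).le ⟨Pi.single f 1, by rw [wordEval_single, one_mul]⟩

lemma wordEval_succ {m : ℕ} (e : (Fin (m + 1) → Fin d) → A) :
    wordEval a e = wordEval a fun f => ∑ j, e (Fin.cons j f) * a j := by
  rw [wordEval_apply, wordEval_apply, ← (Fin.consEquiv fun _ => Fin d).sum_comp,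
    Fintype.sum_prod_type, Finset.sum_comm]
  refine sum_congr rfl fun f _ => ?_
  rw [Finset.sum_mul]
  refine sum_congr rfl fun j _ => ?_
  change e (Fin.cons j f) * wordProd a (Fin.cons j f : Fin (m + 1) → Fin d) = _
  rw [wordProd_cons]
  ring

end Words

section Sorting

def sortWord (f : Fin n → Fin d) : Fin n → Fin d := f ∘ Tuple.sort f

lemma monotone_sortWord (f : Fin n → Fin d) : Monotone (sortWord f) := Tuple.monotone_sort f

lemma sortWord_comp_perm (f : Fin n → Fin d) (σ : Equiv.Perm (Fin n)) :
    sortWord (f ∘ σ) = sortWord f :=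
  Tuple.comp_perm_comp_sort_eq_comp_sort

lemma sortWord_eq_self {f : Fin n → Fin d} (hf : Monotone f) : sortWord f = f := by
  rw [sortWord, Tuple.sort_eq_refl_iff_monotone.mpr hf]; rfl

lemma wordProd_sortWord (a : Fin d → A) (f : Fin n → Fin d) :
    wordProd a (sortWord f) = wordProd a f :=
  wordProd_comp_perm a f _

def sortSum : ((Fin n → Fin d) → A) →ₗ[A] ((Fin n → Fin d) → A) := pushforward sortWord

lemma sortSum_apply_of_not_monotone (c : (Fin n → Fin d) → A) {g : Fin n → Fin d}
    (hg : ¬ Monotone g) : sortSum c g = 0 := by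
  rw [sortSum, pushforward_apply, Finset.sum_eq_zero]
  intro f hf
  exact (hg ((mem_filter.1 hf).2 ▸ monotone_sortWord f)).elim

lemma sortSum_eq_self {c : (Fin n → Fin d) → A} (hc : ∀ g, ¬ Monotone g → c g = 0) :
    sortSum c = c := by
  funext g
  by_cases hg : Monotone g
  · rw [sortSum, pushforward_apply]
    refine Finset.sum_eq_single_of_mem g (by simp [sortWord_eq_self hg]) fun f hf hfg => ?_
    refine hc f fun hf' => hfg ?_
    rw [← (mem_filter.1 hf).2, sortWord_eq_self hf']
  · rw [hc g hg, sortSum_apply_of_not_monotone c hg]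

lemma sortSum_apply_mem_of_forall_mem {J : Ideal A} {c : (Fin n → Fin d) → A} (hc : ∀ f, c f ∈ J)
    (g : Fin n → Fin d) : sortSum c g ∈ J := by
  rw [sortSum, pushforward_apply]
  exact sum_mem fun f _ => hc f

lemma wordEval_sortSum (a : Fin d → A) (c : (Fin n → Fin d) → A) :
    wordEval a (sortSum c) = wordEval a c := by
  rw [wordEval, sortSum, linearCombination_pushforward]
  exact congrArg (Fintype.linearCombination A · c) (funext (wordProd_sortWord a))

lemma sub_sortSum_mem_wordRelations (a : Fin d → A) (c : (Fin n → Fin d) → A) :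
    c - sortSum c ∈ wordRelations a := by
  have hc : c - sortSum c = ∑ f, (Pi.single f (c f) - Pi.single (sortWord f) (c f)) := by
    conv_lhs => rw [← Finset.univ_sum_single c]
    simp only [map_sum, sortSum, pushforward_single, Finset.sum_sub_distrib]
  rw [hc]
  refine sum_mem fun f _ => ?_
  rw [← mul_one (c f), ← smul_eq_mul, Pi.single_smul, Pi.single_smul, ← smul_sub, ← neg_sub,
    smul_neg]
  exact neg_mem (Submodule.smul_mem _ _ (Submodule.subset_span (Or.inl ⟨f, _, rfl⟩)))

lemma sortSum_apply_mem_of_mem_wordRelations {a : Fin d → A} {J : Ideal A}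
    (ha : ∀ j, a j ∈ J) {k : (Fin n → Fin d) → A} (hk : k ∈ wordRelations a)
    (g : Fin n → Fin d) : sortSum k g ∈ J := by
  induction hk using Submodule.span_induction with
  | mem x hx =>
    rcases hx with ⟨f, σ, rfl⟩ | ⟨f, i, p, q, rfl⟩
    · simp [sortSum, pushforward_single, sortWord_comp_perm]
    · simp only [map_sub, map_smul, sortSum, pushforward_single, Pi.sub_apply, Pi.smul_apply,
        smul_eq_mul]
      exact sub_mem (J.mul_mem_right _ (ha q)) (J.mul_mem_right _ (ha p))
  | zero => simp
  | add x y _ _ hx hy => rw [map_add, Pi.add_apply]; exact add_mem hx hy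
  | smul r x _ hx => rw [map_smul, Pi.smul_apply, smul_eq_mul]; exact J.mul_mem_left r hx

end Sorting

section QuasiRegular

variable {a : Fin d → A}

/-- Quasi-regularity: a form of degree `m` whose value lies in `I ^ (m + 1)` has its coefficients
in `I`. -/
lemma IsLinearType.sortSum_apply_mem_of_wordEval_mem (h : IsLinearType a) {m : ℕ}
    {c : (Fin m → Fin d) → A}
    (hc : wordEval a c ∈ Ideal.span (Set.range a) ^ (m + 1)) (g : Fin m → Fin d) :
    sortSum c g ∈ Ideal.span (Set.range a) := by
  have ha : ∀ j, a j ∈ Ideal.span (Set.range a) := fun j => Ideal.subset_span ⟨j, rfl⟩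
  obtain ⟨e, he⟩ := (range_wordEval a).ge hc
  set c' : (Fin m → Fin d) → A := fun f => ∑ j, e (Fin.cons j f) * a j
  have hrel : c - c' ∈ wordRelations a := by
    rw [← h, LinearMap.mem_ker, map_sub, ← wordEval_succ, he, sub_self]
  have hc' : sortSum c' g ∈ Ideal.span (Set.range a) :=
    sortSum_apply_mem_of_forall_mem (fun f => sum_mem fun j _ => Ideal.mul_mem_left _ _ (ha j)) g
  simpa using add_mem (sortSum_apply_mem_of_mem_wordRelations ha hrel g) hc'

lemma IsLinearType.mem_pow_of_mul_mem_pow (h : IsLinearType a) {b : A}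
    (hb : ∀ x, b * x ∈ Ideal.span (Set.range a) → x ∈ Ideal.span (Set.range a)) {s : ℕ} {x : A}
    (hx : b * x ∈ Ideal.span (Set.range a) ^ s) : x ∈ Ideal.span (Set.range a) ^ s := by
  suffices ∀ k ≤ s, x ∈ Ideal.span (Set.range a) ^ k from this s le_rfl
  intro k
  induction k with
  | zero => simp
  | succ k ih =>
    intro hk
    obtain ⟨c, rfl⟩ := (range_wordEval a).ge (ih (by omega))
    -- quasi-regularity puts the sorted coefficients of `b • c` in `I`, hence those of `c`
    have hsort (g : Fin k → Fin d) : sortSum c g ∈ Ideal.span (Set.range a) := by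
      refine hb _ ?_
      have hbc : wordEval a (b • c) ∈ Ideal.span (Set.range a) ^ (k + 1) := by
        rw [map_smul, smul_eq_mul]; exact Ideal.pow_le_pow_right hk hx
      simpa using h.sortSum_apply_mem_of_wordEval_mem hbc g
    rw [← wordEval_sortSum, wordEval_apply, pow_succ']
    exact sum_mem fun g _ => Ideal.mul_mem_mul (hsort g) (wordProd_mem_pow a g)

lemma IsLinearType.mem_pow_of_mul_pow_mem_pow (h : IsLinearType a) {b : A}
    (hb : ∀ x, b * x ∈ Ideal.span (Set.range a) → x ∈ Ideal.span (Set.range a)) {s : ℕ}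
    (t : ℕ) {x : A} (hx : x * b ^ t ∈ Ideal.span (Set.range a) ^ s) :
    x ∈ Ideal.span (Set.range a) ^ s := by
  induction t generalizing x with
  | zero => simpa using hx
  | succ t ih => exact ih (h.mem_pow_of_mul_mem_pow hb (by convert hx using 1; ring))

end QuasiRegular

section LastLetter

def lastCount (f : Fin n → Fin (d + 1)) : ℕ := #{i | f i = Fin.last d}

lemma lastCount_le (f : Fin n → Fin (d + 1)) : lastCount f ≤ n :=
  (card_filter_le _ _).trans (by simp)

lemma lastCount_comp_perm (f : Fin n → Fin (d + 1)) (σ : Equiv.Perm (Fin n)) :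
    lastCount (f ∘ σ) = lastCount f := by
  simp only [lastCount, card_filter]
  exact Equiv.sum_comp σ fun i => if f i = Fin.last d then 1 else 0

lemma sortSum_apply_eq_zero_of_lt_lastCount {t : ℕ} {c : (Fin n → Fin (d + 1)) → A}
    (hc : ∀ f, t < lastCount f → c f = 0) {g : Fin n → Fin (d + 1)} (hg : t < lastCount g) :
    sortSum c g = 0 := by
  rw [sortSum, pushforward_apply]
  refine sum_eq_zero fun f hf => hc f ?_
  rwa [← (mem_filter.1 hf).2, sortWord, lastCount_comp_perm] at hg

lemma lastCount_update_lt {f : Fin n → Fin (d + 1)} {i : Fin n} (hi : f i = Fin.last d)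
    (j : Fin d) : lastCount (Function.update f i j.castSucc) < lastCount f := by
  simp only [lastCount, card_filter]
  rw [Fintype.sum_eq_add_sum_compl i, Fintype.sum_eq_add_sum_compl i (f := fun k => ite _ _ _)]
  simp only [Function.update_self, Fin.castSucc_ne_last, hi, if_true, if_false]
  rw [sum_congr rfl fun k hk => by rw [Function.update_of_ne (by simpa using hk)]]
  omega

lemma wordProd_mem_pow_lastCount (a : Fin (d + 1) → A) (f : Fin n → Fin (d + 1)) :
    wordProd a f ∈ Ideal.span (Set.range (a ∘ Fin.castSucc)) ^ (n - lastCount f) := by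
  have hcard : #{i | ¬ f i = Fin.last d} = n - lastCount f := by
    have := card_filter_add_card_filter_not (s := univ) fun i => f i = Fin.last d
    simp only [card_univ, Fintype.card_fin] at this
    rw [lastCount]; omega
  rw [wordProd, ← prod_filter_mul_prod_filter_not univ fun i => f i = Fin.last d, ← hcard,
    ← prod_const]
  refine Ideal.mul_mem_left _ _ (Ideal.prod_mem_prod fun i hi => ?_)
  obtain ⟨j, hj⟩ := Fin.exists_castSucc_eq.mpr (mem_filter.1 hi).2
  exact Ideal.subset_span ⟨j, by simp [hj]⟩

def padLast {m : ℕ} (t : ℕ) (g : Fin m → Fin d) : Fin (m + t) → Fin (d + 1) :=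
  Fin.append (Fin.castSucc ∘ g) fun _ => Fin.last d

variable {m t : ℕ}

lemma padLast_injective : Function.Injective (padLast (d := d) (m := m) t) := by
  intro g g' h
  funext i
  simpa [padLast] using congrFun h (Fin.castAdd t i)

lemma lastCount_padLast (g : Fin m → Fin d) : lastCount (padLast t g) = t := by
  rw [lastCount, card_filter, Fin.sum_univ_add]
  simp [padLast]

lemma wordProd_padLast (a : Fin (d + 1) → A) (g : Fin m → Fin d) :
    wordProd a (padLast t g) = wordProd (a ∘ Fin.castSucc) g * a (Fin.last d) ^ t := by
  simp [wordProd, padLast, Fin.prod_univ_add]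

lemma monotone_of_monotone_padLast {g : Fin m → Fin d} (h : Monotone (padLast t g)) :
    Monotone g := by
  intro i j hij
  have : Fin.castAdd t i ≤ Fin.castAdd t j := hij
  simpa [padLast] using h this

lemma exists_padLast_eq {f : Fin (m + t) → Fin (d + 1)} (hf : Monotone f)
    (ht : lastCount f = t) : ∃ g : Fin m → Fin d, padLast t g = f := by
  have key (i : Fin (m + t)) : f i = Fin.last d ↔ m ≤ i := by
    constructor
    · intro hi
      have hsub : Ici i ⊆ ({j | f j = Fin.last d} : Finset _) := fun j hj => by
        simpa [hi] using Fin.last_le_iff.mp (hi ▸ hf (mem_Ici.mp hj))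
      have := card_le_card hsub
      rw [Fin.card_Ici, ← lastCount, ht] at this
      omega
    · intro hi
      by_contra hne
      have hsub : ({j | f j = Fin.last d} : Finset _) ⊆ Ioi i := fun j hj => by
        simp only [mem_filter, mem_univ, true_and] at hj
        by_contra hji
        exact hne (Fin.last_le_iff.mp (hj ▸ hf (not_lt.mp (by simpa using hji))))
      have := card_le_card hsub
      rw [Fin.card_Ioi, ← lastCount, ht] at this
      omega
  refine ⟨fun i => (f (Fin.castAdd t i)).castPred fun h => ?_, funext fun k => ?_⟩
  · have := (key _).mp h; simp at this; omega
  · refine Fin.addCases (fun i => ?_) (fun j => ?_) k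
    · simp [padLast]
    · simpa [padLast] using ((key _).mpr (by simp)).symm

end LastLetter

section Induction

variable {a : Fin (d + 1) → A}

lemma IsLinearType.mem_wordRelations_of_lastCount_eq_zero (h : IsLinearType (a ∘ Fin.castSucc))
    {c : (Fin n → Fin (d + 1)) → A} (hc : wordEval a c = 0)
    (h0 : ∀ f, lastCount f ≠ 0 → c f = 0) : c ∈ wordRelations a := by
  set F : (Fin n → Fin d) → Fin n → Fin (d + 1) := fun g => Fin.castSucc ∘ g
  have hF : Function.Injective F := fun g g' hg =>
    funext fun i => Fin.castSucc_injective d (congrFun hg i)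
  have hvanish : ∀ f ∉ Set.range F, c f = 0 := by
    intro f hf
    refine h0 f (Nat.pos_iff_ne_zero.mp (card_pos.mpr ?_))
    by_contra hne
    exact hf ⟨fun i => (f i).castPred fun hi => hne ⟨i, by simp [hi]⟩, funext fun i => by simp [F]⟩
  have hc' : pushforward F (c ∘ F) = c := pushforward_comp_of_injective hF hvanish
  have hker : c ∘ F ∈ wordRelations (a ∘ Fin.castSucc) := by
    rw [← h, LinearMap.mem_ker, ← wordEval_pushforward_comp, hc', hc]
  rw [← hc']
  exact wordRelations_map_comp_le a _ (Submodule.mem_map_of_mem hker)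

/-- Modulo `I' ^ (m + 1)` only the sorted words with exactly `t` last letters contribute, and these
are the `padLast t g`. -/
lemma wordEval_sub_mul_pow_mem {m t : ℕ} {c : (Fin (m + t) → Fin (d + 1)) → A}
    (hmono : ∀ f, ¬ Monotone f → c f = 0) (htop : ∀ f, t < lastCount f → c f = 0) :
    wordEval a c - wordEval (a ∘ Fin.castSucc) (c ∘ padLast t) * a (Fin.last d) ^ t ∈
      Ideal.span (Set.range (a ∘ Fin.castSucc)) ^ (m + 1) := by
  have htopsum : wordEval (a ∘ Fin.castSucc) (c ∘ padLast t) * a (Fin.last d) ^ t =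
      ∑ f with lastCount f = t, c f * wordProd a f := by
    calc _ = ∑ g, c (padLast t g) * wordProd a (padLast t g) := by
          rw [wordEval_apply, sum_mul]
          exact sum_congr rfl fun g _ => by rw [wordProd_padLast, Function.comp_apply, mul_assoc]
      _ = ∑ f ∈ univ.image (padLast t), c f * wordProd a f :=
          (sum_image (f := fun f => c f * wordProd a f) fun _ _ _ _ hg =>
            padLast_injective hg).symm
      _ = _ := by
          refine sum_subset (fun f hf => ?_) fun f hf hnot => ?_
          · obtain ⟨g, -, rfl⟩ := mem_image.mp hf
            simp [lastCount_padLast]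
          · by_cases hfm : Monotone f
            · obtain ⟨g, rfl⟩ := exists_padLast_eq hfm (mem_filter.mp hf).2
              exact (hnot (mem_image_of_mem _ (mem_univ g))).elim
            · rw [hmono f hfm, zero_mul]
  rw [htopsum, wordEval_apply, ← sum_filter_add_sum_filter_not univ fun f => lastCount f = t,
    add_sub_cancel_left]
  refine sum_mem fun f hf => ?_
  rcases lt_or_gt_of_ne (mem_filter.mp hf).2 with hlt | hgt
  · exact Ideal.mul_mem_left _ _
      (Ideal.pow_le_pow_right (by omega) (wordProd_mem_pow_lastCount a f))
  · rw [htop f hgt, zero_mul]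
    exact zero_mem _

lemma IsLinearType.sortSum_apply_mem_of_lastCount_eq (h : IsLinearType (a ∘ Fin.castSucc))
    (hb : ∀ x, a (Fin.last d) * x ∈ Ideal.span (Set.range (a ∘ Fin.castSucc)) →
      x ∈ Ideal.span (Set.range (a ∘ Fin.castSucc)))
    {m t : ℕ} {c : (Fin (m + t) → Fin (d + 1)) → A} (hc : wordEval a c = 0)
    (htop : ∀ f, t < lastCount f → c f = 0) {f : Fin (m + t) → Fin (d + 1)}
    (hf : lastCount f = t) : sortSum c f ∈ Ideal.span (Set.range (a ∘ Fin.castSucc)) := by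
  have hmono (f) (hf : ¬ Monotone f) : sortSum c f = 0 := sortSum_apply_of_not_monotone c hf
  have hpad : ∀ g, sortSum c (padLast t g) ∈ Ideal.span (Set.range (a ∘ Fin.castSucc)) := by
    have hev := wordEval_sub_mul_pow_mem (a := a) hmono fun _ =>
      sortSum_apply_eq_zero_of_lt_lastCount htop
    rw [wordEval_sortSum, hc, zero_sub, neg_mem_iff] at hev
    have hself : sortSum (sortSum c ∘ padLast t) = sortSum c ∘ padLast t :=
      sortSum_eq_self fun g hg => hmono _ fun h => hg (monotone_of_monotone_padLast h)
    intro g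
    rw [← Function.comp_apply (f := sortSum c), ← hself]
    exact h.sortSum_apply_mem_of_wordEval_mem (h.mem_pow_of_mul_pow_mem_pow hb t hev) g
  by_cases hfm : Monotone f
  · obtain ⟨g, rfl⟩ := exists_padLast_eq hfm hf
    exact hpad g
  · rw [hmono f hfm]
    exact zero_mem _

lemma exists_single_sub_mem_wordRelations (a : Fin (d + 1) → A) {f : Fin n → Fin (d + 1)}
    {i : Fin n} (hi : f i = Fin.last d) {x : A}
    (hx : x ∈ Ideal.span (Set.range (a ∘ Fin.castSucc))) :
    ∃ c' : (Fin n → Fin (d + 1)) → A, Pi.single f x - c' ∈ wordRelations a ∧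
      ∀ g, lastCount f ≤ lastCount g → c' g = 0 := by
  obtain ⟨r, rfl⟩ := Ideal.mem_span_range_iff_exists_fun.mp hx
  refine ⟨∑ j, Pi.single (Function.update f i j.castSucc) (r j * a (Fin.last d)), ?_,
    fun g hg => ?_⟩
  · have hsum : (Pi.single f (∑ j, r j * (a ∘ Fin.castSucc) j) : (Fin n → Fin (d + 1)) → A) =
        ∑ j, Pi.single f (r j * (a ∘ Fin.castSucc) j) :=
      map_sum (AddMonoidHom.single (fun _ => A) f) _ univ
    rw [hsum, ← sum_sub_distrib]
    refine sum_mem fun j _ => ?_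
    have hgen : a (Fin.last d) • Pi.single (Function.update f i j.castSucc) 1 -
        a j.castSucc • Pi.single (Function.update f i (Fin.last d)) 1 ∈ wordRelations a :=
      Submodule.subset_span (Or.inr ⟨f, i, _, _, rfl⟩)
    rw [show Function.update f i (Fin.last d) = f from hi ▸ Function.update_eq_self i f] at hgen
    convert neg_mem (Submodule.smul_mem _ (r j) hgen) using 1
    ext g
    simp only [Pi.sub_apply, Pi.neg_apply, Pi.smul_apply,
      Pi.single_apply, Function.comp_apply, smul_eq_mul]
    split_ifs <;> ring
  · rw [Finset.sum_apply]
    refine sum_eq_zero fun j _ => Pi.single_eq_of_ne ?_ _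
    rintro rfl
    exact absurd hg (not_le.mpr (lastCount_update_lt hi j))

lemma exists_sub_mem_wordRelations_of_top_mem (a : Fin (d + 1) → A) {t : ℕ}
    {c : (Fin n → Fin (d + 1)) → A} (htop : ∀ f, t + 1 < lastCount f → c f = 0)
    (hmem : ∀ f, lastCount f = t + 1 → c f ∈ Ideal.span (Set.range (a ∘ Fin.castSucc))) :
    ∃ c', c - c' ∈ wordRelations a ∧ ∀ f, t < lastCount f → c' f = 0 := by
  have hterm (f : Fin n → Fin (d + 1)) : ∃ c' : (Fin n → Fin (d + 1)) → A,
      Pi.single f (c f) - c' ∈ wordRelations a ∧ ∀ g, t < lastCount g → c' g = 0 := by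
    by_cases hf : lastCount f = t + 1
    · obtain ⟨i, hi⟩ := card_pos.mp (hf ▸ t.succ_pos : 0 < lastCount f)
      obtain ⟨c', hc', hc'top⟩ :=
        exists_single_sub_mem_wordRelations a (mem_filter.mp hi).2 (hmem f hf)
      exact ⟨c', hc', fun g hg => hc'top g (by omega)⟩
    · refine ⟨Pi.single f (c f), by simp, fun g hg => ?_⟩
      by_cases hgf : g = f
      · subst hgf
        rw [Pi.single_eq_same, htop g (by omega)]
      · exact Pi.single_eq_of_ne hgf _
  choose c' hc' hc'top using hterm
  refine ⟨∑ f, c' f, ?_, fun g hg => ?_⟩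
  · rw [← univ_sum_single c, ← sum_sub_distrib]
    exact sum_mem fun f _ => hc' f
  · rw [Finset.sum_apply]
    exact sum_eq_zero fun f _ => hc'top f g hg

lemma IsLinearType.succ (h : IsLinearType (a ∘ Fin.castSucc))
    (hb : ∀ x, a (Fin.last d) * x ∈ Ideal.span (Set.range (a ∘ Fin.castSucc)) →
      x ∈ Ideal.span (Set.range (a ∘ Fin.castSucc))) : IsLinearType a := by
  intro n
  refine le_antisymm (fun c hc => ?_) (wordRelations_le_ker a)
  suffices ∀ t (c : (Fin n → Fin (d + 1)) → A), wordEval a c = 0 →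
      (∀ f, t < lastCount f → c f = 0) → c ∈ wordRelations a from
    this n c hc fun f hf => absurd (lastCount_le f) (not_le.mpr hf)
  intro t
  induction t with
  | zero => exact fun c hc h0 =>
      h.mem_wordRelations_of_lastCount_eq_zero hc fun f hf => h0 f (Nat.pos_of_ne_zero hf)
  | succ t ih =>
    intro c hc htop
    obtain htn | htn := le_or_gt (t + 1) n
    · obtain ⟨m, rfl⟩ := Nat.exists_eq_add_of_le' htn
      obtain ⟨c', hc', hc'top⟩ := exists_sub_mem_wordRelations_of_top_mem a
        (fun f => sortSum_apply_eq_zero_of_lt_lastCount htop)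
        fun f => h.sortSum_apply_mem_of_lastCount_eq hb hc htop
      have hc'ker : wordEval a c' = 0 := by
        simpa [wordEval_sortSum, hc] using wordRelations_le_ker a hc'
      simpa using add_mem (sub_sortSum_mem_wordRelations a c) (add_mem hc' (ih c' hc'ker hc'top))
    · exact ih c hc fun f hf => absurd (lastCount_le f) (by omega)

end Induction

lemma isLinearType_fin_zero (a : Fin 0 → A) : IsLinearType a := by
  intro n
  refine le_antisymm (fun c hc => ?_) (wordRelations_le_ker a)
  suffices c = 0 by rw [this]; exact zero_mem _
  funext f
  have : IsEmpty (Fin n) := ⟨fun i => (f i).elim0⟩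
  rwa [LinearMap.mem_ker, wordEval_apply, Fintype.sum_subsingleton _ f, wordProd,
    univ_eq_empty, prod_empty, mul_one] at hc

open RingTheory.Sequence in
lemma isWeaklyRegular_ofFn_succ_iff (a : Fin (d + 1) → A) :
    IsWeaklyRegular A (List.ofFn a) ↔ IsWeaklyRegular A (List.ofFn (a ∘ Fin.castSucc)) ∧
      ∀ x, a (Fin.last d) * x ∈ Ideal.span (Set.range (a ∘ Fin.castSucc)) →
        x ∈ Ideal.span (Set.range (a ∘ Fin.castSucc)) := by
  have hofList : Ideal.ofList (List.ofFn fun i => a (Fin.castSucc i)) =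
      Ideal.span (Set.range (a ∘ Fin.castSucc)) := by
    rw [Ideal.ofList]
    congr 1
    ext
    simp [List.mem_ofFn']
  rw [List.ofFn_succ', List.concat_eq_append, isWeaklyRegular_append_iff,
    isWeaklyRegular_singleton_iff, isSMulRegular_quotient_iff_mem_of_smul_mem, hofList,
    Ideal.smul_eq_mul, Ideal.mul_top]
  rfl

open RingTheory.Sequence in
theorem isLinearType_of_isWeaklyRegular :
    ∀ {d : ℕ} {a : Fin d → A}, IsWeaklyRegular A (List.ofFn a) → IsLinearType a
  | 0, a, _ => isLinearType_fin_zero a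
  | _ + 1, a, h =>
    have ⟨h', hb⟩ := (isWeaklyRegular_ofFn_succ_iff a).mp h
    (isLinearType_of_isWeaklyRegular h').succ hb

section Tensor

open PiTensorProduct

variable (A) in
def symmRelations (M : Type*) [AddCommGroup M] [Module A M] (n : ℕ) :
    Submodule A (⨂[A] _ : Fin n, M) :=
  Submodule.span A
    {x | ∃ (v : Fin n → M) (σ : Equiv.Perm (Fin n)), x = tprod A v - tprod A (v ∘ σ)}

variable {M : Type*} [AddCommGroup M] [Module A M]

variable (A) in
def wordTensor (v : Fin d → M) : ((Fin n → Fin d) → A) →ₗ[A] ⨂[A] _ : Fin n, M :=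
  Fintype.linearCombination A fun f => tprod A (v ∘ f)

lemma wordTensor_surjective {v : Fin d → M} (hv : Submodule.span A (Set.range v) = ⊤) :
    Function.Surjective (wordTensor A v (n := n)) := by
  rw [← LinearMap.range_eq_top, wordTensor, Fintype.range_linearCombination, eq_top_iff,
    ← span_tprod_eq_top, Submodule.span_le]
  rintro _ ⟨w, rfl⟩
  have hw (i : Fin n) : ∃ c : Fin d → A, ∑ j, c j • v j = w i :=
    (Submodule.mem_span_range_iff_exists_fun A).mp (hv ▸ Submodule.mem_top)
  choose c hc using hw
  rw [show w = fun i => ∑ j, c i j • v j from funext fun i => (hc i).symm,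
    MultilinearMap.map_sum]
  refine sum_mem fun f _ => ?_
  rw [MultilinearMap.map_smul_univ]
  exact Submodule.smul_mem _ _ (Submodule.subset_span ⟨f, rfl⟩)

lemma wordRelations_map_wordTensor_le {a : Fin d → A} {v : Fin d → M}
    (hv : ∀ p q, a q • v p = a p • v q) :
    (wordRelations a).map (wordTensor A v (n := n)) ≤ symmRelations A M n := by
  rw [wordRelations, Submodule.map_span_le]
  rintro x (⟨f, σ, rfl⟩ | ⟨f, i, p, q, rfl⟩)
  · rw [map_sub, wordTensor, Fintype.linearCombination_apply_single,
      Fintype.linearCombination_apply_single, one_smul, one_smul, ← neg_sub]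
    exact neg_mem (Submodule.subset_span ⟨v ∘ f, σ, rfl⟩)
  · simp only [map_sub, map_smul, wordTensor, Fintype.linearCombination_apply_single, one_smul,
      Function.comp_update, ← MultilinearMap.map_update_smul, hv p q, sub_self]
    exact zero_mem _

lemma span_range_eq_top_of_coe_eq {a : Fin d → A} (v : Fin d → Ideal.span (Set.range a))
    (hv : ∀ j, (v j : A) = a j) : Submodule.span A (Set.range v) = ⊤ := by
  convert Submodule.span_span_coe_preimage (R := A) (s := Set.range a)
  ext x
  exact ⟨fun ⟨j, hj⟩ => ⟨j, hj ▸ (hv j).symm⟩, fun ⟨j, hj⟩ => ⟨j, Subtype.ext ((hv j).trans hj)⟩⟩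

variable {I : Ideal A} {μ : (⨂[A] _ : Fin n, I) →ₗ[A] A}

lemma symmRelations_le_ker (hμ : ∀ w, μ (tprod A w) = ∏ i, (w i : A)) :
    symmRelations A I n ≤ LinearMap.ker μ := by
  rw [symmRelations, Submodule.span_le]
  rintro _ ⟨w, σ, rfl⟩
  simp [hμ, Equiv.prod_comp σ fun i => (w i : A)]

lemma comp_wordTensor_eq_wordEval (hμ : ∀ w, μ (tprod A w) = ∏ i, (w i : A)) {a : Fin d → A}
    {v : Fin d → I} (hv : ∀ j, (v j : A) = a j) : μ ∘ₗ wordTensor A v = wordEval a := by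
  refine LinearMap.ext fun c => ?_
  simp only [LinearMap.comp_apply, wordTensor, wordEval, Fintype.linearCombination_apply,
    map_sum, map_smul, hμ, Function.comp_apply, hv]
  rfl

end Tensor

end LinearType

open LinearType

/-- `Sym^n(I)` is `I^{⊗n}` modulo the span of the symmetry relations, so the two conjuncts say that
`μ` induces an isomorphism `Sym^n(I) ≅ I^n`. -/
theorem stmt5 (A : Type u_1) [CommRing A] (d : ℕ) (a : Fin d → A)
    (hreg : RingTheory.Sequence.IsRegular A (List.ofFn a))
    (I : Ideal A) (hI : I = Ideal.span (Set.range a)) (n : ℕ)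
    (μ : (⨂[A] _ : Fin n, I) →ₗ[A] A)
    (hμ : μ = PiTensorProduct.lift
      ((MultilinearMap.mkPiAlgebra A (Fin n) A).compLinearMap
        (fun _ : Fin n => I.subtype))) :
    LinearMap.ker μ =
      Submodule.span A
        {x : ⨂[A] _ : Fin n, I | ∃ (v : Fin n → I) (σ : Equiv.Perm (Fin n)),
          x = PiTensorProduct.tprod A v - PiTensorProduct.tprod A (v ∘ σ)} ∧
    LinearMap.range μ = (I ^ n : Ideal A) := by
  subst hI
  have hμ_tprod (w : Fin n → Ideal.span (Set.range a)) :
      μ (PiTensorProduct.tprod A w) = ∏ i, (w i : A) := by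
    simp [hμ]
  let v : Fin d → Ideal.span (Set.range a) := fun j => ⟨a j, Ideal.subset_span ⟨j, rfl⟩⟩
  have hsurj : Function.Surjective (wordTensor A v (n := n)) :=
    wordTensor_surjective (span_range_eq_top_of_coe_eq v fun _ => rfl)
  have hμv : μ ∘ₗ wordTensor A v = wordEval a := comp_wordTensor_eq_wordEval hμ_tprod fun _ => rfl
  refine ⟨le_antisymm ?_ (symmRelations_le_ker hμ_tprod), ?_⟩
  · rw [← Submodule.map_comap_eq_of_surjective hsurj (LinearMap.ker μ), ← LinearMap.ker_comp, hμv,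
      isLinearType_of_isWeaklyRegular hreg.toIsWeaklyRegular n]
    exact wordRelations_map_wordTensor_le fun p q => Subtype.ext (mul_comm _ _)
  · rw [← LinearMap.range_comp_of_range_eq_top μ (LinearMap.range_eq_top.mpr hsurj), hμv,
      range_wordEval]
end

section
/- Let A be a commutative ring, let (a₁, …, a_d) be a sequence in A, let 1 ≤ e ≤ d, and let (a₁, …, a_e, b₁, …, b_ℓ) generate an ideal J such that (a₁, …, a_e, b₁, …, b_ℓ) is a regular sequence and the images of a_{e+1}, …, a_d in A' = A/J form a regular sequence. Let Ã = A[x₁, …, x_{d−1}]/(a₁ − a_d x₁, …, a_{d−1} − a_d x_{d−1}), and let Ã' = A'[x_{e+1}, …, x_{d−1}]/(ā_{e+1} − ā_d x_{e+1}, …, ā_{d−1} − ā_d x_{d−1}). Then the kernel of the natural A-algebra surjection Ã → Ã' (sending x₁, …, x_e to 0 and xᵢ to xᵢ for i > e) is generated by the images of x₁, …, x_e, b₁, …, b_ℓ. -/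
set_option maxHeartbeats 1000000
set_option synthInstance.maxHeartbeats 400000

open MvPolynomial

/-- Local form of Lemma 4.2: the kernel of the natural surjection from the blow-up
chart `Ã` of `Spec A` along `(a₁,…,a_d)` to the corresponding chart `Ã'` of the
blow-up of `Spec A/(a₁,…,a_e,b₁,…,b_ℓ)` is generated by the images of
`x₁,…,x_e,b₁,…,b_ℓ`.  Here `d = e + m + 1`. -/
theorem stmt12 (A : Type*) [CommRing A] (e m ℓ : ℕ)
    (a : Fin (e + m + 1) → A) (b : Fin ℓ → A)
    (J : Ideal A)
    (hJ : J = Ideal.span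
      ((Set.range fun i : Fin e => a (Fin.castLE (by omega) i)) ∪ Set.range b))
    (hreg1 : RingTheory.Sequence.IsRegular A
      ((List.ofFn fun i : Fin e => a (Fin.castLE (by omega) i)) ++ List.ofFn b))
    (a' : Fin (m + 1) → A ⧸ J)
    (ha' : a' = fun i => Ideal.Quotient.mk J (a (Fin.natAdd e i)))
    (hreg2 : RingTheory.Sequence.IsRegular (A ⧸ J) (List.ofFn a'))
    (Itil : Ideal (MvPolynomial (Fin (e + m)) A))
    (hItil : Itil = Ideal.span (Set.range fun i : Fin (e + m) =>
      C (a i.castSucc) - C (a (Fin.last (e + m))) * X i))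
    (Itil' : Ideal (MvPolynomial (Fin m) (A ⧸ J)))
    (hItil' : Itil' = Ideal.span (Set.range fun i : Fin m =>
      C (a' i.castSucc) - C (a' (Fin.last m)) * X i))
    (ψ : (MvPolynomial (Fin (e + m)) A ⧸ Itil) →ₐ[A]
      (MvPolynomial (Fin m) (A ⧸ J) ⧸ Itil'))
    (hψ : ∀ i : Fin (e + m),
      ψ (Ideal.Quotient.mk Itil (X i)) =
        if h : (i : ℕ) < e then 0
        else Ideal.Quotient.mk Itil' (X ⟨(i : ℕ) - e, by have := i.isLt; omega⟩)) :
    RingHom.ker ψ =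
      Ideal.span
        (Ideal.Quotient.mk Itil ''
          ((Set.range fun i : Fin e =>
              (X (Fin.castLE (by omega) i) : MvPolynomial (Fin (e + m)) A)) ∪
            Set.range fun j : Fin ℓ => C (b j))) := by
  classical
  set R := MvPolynomial (Fin (e + m)) A with hR
  set K : Ideal (R ⧸ Itil) := Ideal.span
        (Ideal.Quotient.mk Itil ''
          ((Set.range fun i : Fin e =>
              (X (Fin.castLE (by omega) i) : MvPolynomial (Fin (e + m)) A)) ∪
            Set.range fun j : Fin ℓ => C (b j))) with hK
  -- membership of the X generators
  have hXmem : ∀ i : Fin e,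
      Ideal.Quotient.mk Itil (X (Fin.castLE (by omega : e ≤ e + m) i) : R) ∈ K := by
    intro i
    exact Ideal.subset_span ⟨X (Fin.castLE (by omega) i), Or.inl ⟨i, rfl⟩, rfl⟩
  have hbmem : ∀ j : Fin ℓ, Ideal.Quotient.mk Itil (C (b j) : R) ∈ K := by
    intro j
    exact Ideal.subset_span ⟨C (b j), Or.inr ⟨j, rfl⟩, rfl⟩
  -- membership of constants a i for i < e
  have hCamem : ∀ i : Fin e,
      Ideal.Quotient.mk Itil (C (a (Fin.castLE (by omega : e ≤ e + m + 1) i)) : R) ∈ K := by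
    intro i
    have hIt : (C (a (Fin.castLE (by omega) i)) : R)
        - C (a (Fin.last (e + m))) * X (Fin.castLE (by omega : e ≤ e + m) i) ∈ Itil := by
      rw [hItil]
      refine Ideal.subset_span ⟨Fin.castLE (by omega) i, ?_⟩
      congr 1
    have heq : Ideal.Quotient.mk Itil (C (a (Fin.castLE (by omega : e ≤ e + m + 1) i)) : R)
        = Ideal.Quotient.mk Itil (C (a (Fin.last (e + m))) * X (Fin.castLE (by omega) i)) :=
      Ideal.Quotient.eq.mpr hIt
    rw [heq, map_mul]
    exact Ideal.mul_mem_left _ _ (hXmem i)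
  -- the ring hom A → Atil/K
  set φ₀ : A →+* (R ⧸ Itil) ⧸ K :=
    ((Ideal.Quotient.mk K).comp (Ideal.Quotient.mk Itil)).comp (C : A →+* R) with hφ₀
  have hJker : ∀ x ∈ J, φ₀ x = 0 := by
    have hle : J ≤ RingHom.ker φ₀ := by
      rw [hJ]
      refine Ideal.span_le.mpr ?_
      rintro y (⟨i, rfl⟩ | ⟨j, rfl⟩) <;>
        simp only [hφ₀, RingHom.coe_comp, Function.comp_apply, SetLike.mem_coe,
          RingHom.mem_ker]
      · exact Ideal.Quotient.eq_zero_iff_mem.mpr (hCamem i)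
      · exact Ideal.Quotient.eq_zero_iff_mem.mpr (hbmem j)
    exact fun x hx => hle hx
  set φ₁ : A ⧸ J →+* (R ⧸ Itil) ⧸ K := Ideal.Quotient.lift J φ₀ hJker with hφ₁
  set φ₂ : MvPolynomial (Fin m) (A ⧸ J) →+* (R ⧸ Itil) ⧸ K :=
    eval₂Hom φ₁ (fun i : Fin m =>
      Ideal.Quotient.mk K (Ideal.Quotient.mk Itil (X (Fin.natAdd e i) : R))) with hφ₂
  have hker2 : ∀ x ∈ Itil', φ₂ x = 0 := by
    have hle : Itil' ≤ RingHom.ker φ₂ := by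
      rw [hItil']
      refine Ideal.span_le.mpr ?_
      rintro y ⟨i, rfl⟩
      rw [SetLike.mem_coe, RingHom.mem_ker, map_sub, map_mul]
      simp only [hφ₂, eval₂Hom_C, eval₂Hom_X']
      rw [ha']
      simp only [hφ₁, Ideal.Quotient.lift_mk, hφ₀, RingHom.coe_comp, Function.comp_apply]
      rw [← map_mul, ← map_mul, ← map_sub, ← map_sub]
      have hIt : (C (a ((Fin.natAdd e i).castSucc)) : R)
          - C (a (Fin.last (e + m))) * X (Fin.natAdd e i) ∈ Itil := by
        rw [hItil]; exact Ideal.subset_span ⟨Fin.natAdd e i, rfl⟩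
      have h1 : (Fin.natAdd e i.castSucc : Fin (e + m + 1)) = (Fin.natAdd e i).castSucc :=
        Fin.ext rfl
      have h2 : (Fin.natAdd e (Fin.last m) : Fin (e + m + 1)) = Fin.last (e + m) :=
        Fin.ext rfl
      rw [h1, h2, Ideal.Quotient.eq_zero_iff_mem.mpr hIt, map_zero]
    exact fun x hx => hle hx
  set φ₃ : (MvPolynomial (Fin m) (A ⧸ J) ⧸ Itil') →+* (R ⧸ Itil) ⧸ K :=
    Ideal.Quotient.lift Itil' φ₂ hker2 with hφ₃
  -- key compatibility
  have hcomp : ∀ p : R, φ₃ (ψ (Ideal.Quotient.mk Itil p)) =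
      Ideal.Quotient.mk K (Ideal.Quotient.mk Itil p) := by
    have : φ₃.comp ((ψ : (R ⧸ Itil) →+* _).comp (Ideal.Quotient.mk Itil)) =
        (Ideal.Quotient.mk K).comp (Ideal.Quotient.mk Itil) := by
      apply MvPolynomial.ringHom_ext
      · intro r
        have h1 : Ideal.Quotient.mk Itil (C r : R) = algebraMap A (R ⧸ Itil) r := rfl
        have h2 : ψ (algebraMap A (R ⧸ Itil) r)
            = algebraMap A (MvPolynomial (Fin m) (A ⧸ J) ⧸ Itil') r := ψ.commutes r
        have h3 : algebraMap A (MvPolynomial (Fin m) (A ⧸ J) ⧸ Itil') r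
            = Ideal.Quotient.mk Itil' (C (Ideal.Quotient.mk J r)) := rfl
        simp only [RingHom.coe_comp, Function.comp_apply, RingHom.coe_coe, h1, h2, h3,
          hφ₃, Ideal.Quotient.lift_mk, hφ₂, eval₂Hom_C, hφ₁, hφ₀]
      · intro i
        simp only [RingHom.coe_comp, Function.comp_apply, RingHom.coe_coe, hψ i]
        by_cases h : (i : ℕ) < e
        · rw [dif_pos h, map_zero]
          have : i = Fin.castLE (by omega : e ≤ e + m) ⟨(i : ℕ), h⟩ := Fin.ext rfl
          rw [this]
          exact (Ideal.Quotient.eq_zero_iff_mem.mpr (hXmem ⟨(i : ℕ), h⟩)).symm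
        · rw [dif_neg h]
          simp only [hφ₃, Ideal.Quotient.lift_mk, hφ₂, eval₂Hom_X']
          have hidx : (Fin.natAdd e (⟨(i : ℕ) - e, by have := i.isLt; omega⟩ : Fin m))
              = i := by
            apply Fin.ext
            show e + ((i : ℕ) - e) = (i : ℕ)
            omega
          rw [hidx]
    intro p
    exact RingHom.congr_fun this p
  refine le_antisymm ?_ ?_
  · intro x hx
    obtain ⟨p, rfl⟩ := Ideal.Quotient.mk_surjective x
    have h0 : ψ (Ideal.Quotient.mk Itil p) = 0 := hx
    have := hcomp p
    rw [h0, map_zero] at this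
    exact Ideal.Quotient.eq_zero_iff_mem.mp this.symm
  · rw [hK]
    refine Ideal.span_le.mpr ?_
    rintro y ⟨q, (⟨i, rfl⟩ | ⟨j, rfl⟩), rfl⟩ <;> simp only [SetLike.mem_coe, RingHom.mem_ker]
    · rw [show ((Fin.castLE (by omega) i : Fin (e + m))) =
        (Fin.castLE (by omega) i) from rfl, hψ]
      rw [dif_pos (by simpa using i.isLt)]
    · have h1 : Ideal.Quotient.mk Itil (C (b j) : R) = algebraMap A (R ⧸ Itil) (b j) := rfl
      have h2 : ψ (algebraMap A (R ⧸ Itil) (b j))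
          = algebraMap A (MvPolynomial (Fin m) (A ⧸ J) ⧸ Itil') (b j) := ψ.commutes _
      have h3 : algebraMap A (MvPolynomial (Fin m) (A ⧸ J) ⧸ Itil') (b j)
          = Ideal.Quotient.mk Itil' (C (Ideal.Quotient.mk J (b j))) := rfl
      have hb0 : Ideal.Quotient.mk J (b j) = 0 := by
        rw [Ideal.Quotient.eq_zero_iff_mem, hJ]
        exact Ideal.subset_span (Or.inr ⟨j, rfl⟩)
      rw [h1, h2, h3, hb0, map_zero, map_zero]
end
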